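/- Let k be a field of characteristic p > 3, let C = Spec(k[x,y]/(ay² + x³ + bx + c)) with a ≠ 0 be an affine Weierstrass curve with discriminant Δ = -4b³ - 27c² = 0 and C integral, and let ν: C̄ → C be the normalization. Then dim_k(ν_* O_{C̄} / O_C) = 1. -/

import Mathlib

open MvPolynomial

universe u

/-- The affine Weierstrass polynomial `a·y² + x³ + b·x + c` in `k[x, y]`
(with `x = X 0`, `y = X 1`). -/
noncomputable def weierstrassPoly {k : Type u} [CommRing k] (a b c : k) :
    MvPolynomial (Fin 2) k :=
  C a * X 1 ^ 2 + X 0 ^ 3 + C b * X 0 + C c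

/-- The coordinate ring `A = k[x,y]/(a y² + x³ + b x + c)` of the affine Weierstrass
curve. -/
noncomputable abbrev weierstrassRing (k : Type u) [CommRing k] (a b c : k) : Type u :=
  MvPolynomial (Fin 2) k ⧸ Ideal.span {weierstrassPoly a b c}

namespace WCD

variable {k : Type u} [Field k] (a r : k)

noncomputable def pu : Polynomial k := Polynomial.C (-a) * Polynomial.X ^ 2 + Polynomial.C (-(2*r))
noncomputable def pv : Polynomial k :=
  Polynomial.C (-a) * Polynomial.X ^ 3 + Polynomial.C (-(3*r)) * Polynomial.X
noncomputable def pm : Polynomial k := Polynomial.X ^ 2 + Polynomial.C (3*r*a⁻¹)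

noncomputable def ψ : MvPolynomial (Fin 2) k →ₐ[k] Polynomial k :=
  MvPolynomial.aeval ![pu a r, pv a r]

@[simp] lemma ψ_X0 : ψ a r (X 0) = pu a r := by simp [ψ]
@[simp] lemma ψ_X1 : ψ a r (X 1) = pv a r := by simp [ψ]
@[simp] lemma ψ_C (e : k) : ψ a r (C e) = Polynomial.C e := by simp [ψ]

lemma ψW : ψ a r (weierstrassPoly a (-(3*r^2)) (2*r^3)) = 0 := by
  simp only [weierstrassPoly, map_add, map_mul, map_pow, ψ_X0, ψ_X1, ψ_C, pu, pv,
    Polynomial.C_mul, Polynomial.C_neg, Polynomial.C_pow, map_ofNat]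
  ring

lemma pv_eq_X_mul : pv a r = Polynomial.X * (pu a r - Polynomial.C r) := by
  simp only [pu, pv, Polynomial.C_mul, Polynomial.C_neg, map_ofNat]; ring

lemma pu_eq (ha : a ≠ 0) : pu a r = Polynomial.C (-a) * pm a r + Polynomial.C r := by
  have h3 : Polynomial.C (-a) * Polynomial.C (3*r*a⁻¹) = Polynomial.C (-(3*r)) := by
    rw [← Polynomial.C_mul]; congr 1; field_simp
  simp only [pm, mul_add, h3, pu]
  simp only [Polynomial.C_neg, Polynomial.C_mul, map_ofNat]
  ring

lemma pv_eq (ha : a ≠ 0) : pv a r = Polynomial.C (-a) * Polynomial.X * pm a r := by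
  have h := pu_eq a r ha
  rw [pv_eq_X_mul, h]; ring


lemma Tsq (ha : a ≠ 0) :
    ψ a r (C (-a⁻¹) * (X 0 + C (2*r))) = (Polynomial.X : Polynomial k) ^ 2 := by
  have key : Polynomial.C (a⁻¹*a) = (1 : Polynomial k) := by
    rw [inv_mul_cancel₀ ha]; exact Polynomial.C_1
  rw [Polynomial.C_mul] at key
  simp only [map_mul, map_add, ψ_X0, ψ_C, pu, Polynomial.C_mul, Polynomial.C_neg, map_ofNat]
  linear_combination (Polynomial.X : Polynomial k) ^ 2 * key

lemma Tcube (ha : a ≠ 0) :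
    (Polynomial.X : Polynomial k) ^ 3
      = ψ a r (C (-a⁻¹) * X 1) + Polynomial.C (-(3*r*a⁻¹)) * Polynomial.X := by
  have key : Polynomial.C (a⁻¹*a) = (1 : Polynomial k) := by
    rw [inv_mul_cancel₀ ha]; exact Polynomial.C_1
  rw [Polynomial.C_mul] at key
  simp only [map_mul, map_add, ψ_X1, ψ_C, pv, Polynomial.C_mul, Polynomial.C_neg, map_ofNat]
  linear_combination (-(Polynomial.X : Polynomial k) ^ 3) * key

lemma pow_mem (ha : a ≠ 0) (n : ℕ) :
    ∃ (f : MvPolynomial (Fin 2) k) (e : k),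
      (Polynomial.X : Polynomial k) ^ n = ψ a r f + Polynomial.C e * Polynomial.X := by
  induction n using Nat.strong_induction_on with
  | _ n ih =>
    match n with
    | 0 => exact ⟨1, 0, by simp⟩
    | 1 => exact ⟨0, 1, by simp⟩
    | (n+2) =>
      obtain ⟨f, e, hf⟩ := ih n (by omega)
      refine ⟨f * (C (-a⁻¹) * (X 0 + C (2*r))) + C e * (C (-a⁻¹) * X 1),
        e * (-(3*r*a⁻¹)), ?_⟩
      have h2 := Tsq a r ha
      have h3 := Tcube a r ha
      calc (Polynomial.X : Polynomial k) ^ (n+2)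
          = Polynomial.X ^ n * Polynomial.X ^ 2 := by ring
        _ = (ψ a r f + Polynomial.C e * Polynomial.X) * Polynomial.X ^ 2 := by rw [hf]
        _ = ψ a r f * Polynomial.X ^ 2 + Polynomial.C e * Polynomial.X ^ 3 := by ring
        _ = ψ a r f * ψ a r (C (-a⁻¹) * (X 0 + C (2*r)))
            + Polynomial.C e * (ψ a r (C (-a⁻¹) * X 1)
              + Polynomial.C (-(3*r*a⁻¹)) * Polynomial.X) := by rw [h2, h3]
        _ = _ := by
            simp only [map_add, map_mul, ψ_C, Polynomial.C_mul]
            ring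

lemma span_eq (ha : a ≠ 0) (p : Polynomial k) :
    ∃ (f : MvPolynomial (Fin 2) k) (e : k),
      p = ψ a r f + Polynomial.C e * Polynomial.X := by
  induction p using Polynomial.induction_on' with
  | add p q hp hq =>
    obtain ⟨f, e, hf⟩ := hp
    obtain ⟨g, s, hg⟩ := hq
    exact ⟨f + g, e + s, by rw [hf, hg]; simp only [map_add, Polynomial.C_add]; ring⟩
  | monomial n e =>
    obtain ⟨f, s, hf⟩ := pow_mem a r ha n
    refine ⟨C e * f, e * s, ?_⟩
    rw [Polynomial.C_mul_X_pow_eq_monomial.symm, hf]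
    simp only [map_mul, ψ_C, Polynomial.C_mul]
    ring

lemma X_not_mem (ha : a ≠ 0) : (Polynomial.X : Polynomial k) ∉ (ψ a r).range := by
  intro hX
  set I : Ideal (Polynomial k) := Ideal.span {pm a r} with hI
  let π : Polynomial k →ₐ[k] (Polynomial k ⧸ I) := Ideal.Quotient.mkₐ k I
  have hm : π (pm a r) = 0 := by
    simp only [π, Ideal.Quotient.mkₐ_eq_mk, Ideal.Quotient.eq_zero_iff_mem]
    exact Ideal.subset_span rfl
  have hrange : (π.comp (ψ a r)).range ≤ ⊥ := by
    have : π.comp (ψ a r) = MvPolynomial.aeval ![π (pu a r), π (pv a r)] := by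
      apply MvPolynomial.algHom_ext
      intro i
      fin_cases i <;> simp [ψ]
    rw [this, ← Algebra.adjoin_range_eq_range_aeval]
    apply Algebra.adjoin_le
    rintro x ⟨i, rfl⟩
    fin_cases i
    · show π (pu a r) ∈ (⊥ : Subalgebra k _)
      rw [pu_eq a r ha, map_add, map_mul, hm, mul_zero, zero_add]
      exact ⟨r, rfl⟩
    · show π (pv a r) ∈ (⊥ : Subalgebra k _)
      rw [pv_eq a r ha, map_mul, hm, mul_zero]
      exact zero_mem _
  obtain ⟨f, hf⟩ := hX
  have : π (Polynomial.X) ∈ (⊥ : Subalgebra k _) := by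
    rw [← hf]
    exact hrange ⟨f, rfl⟩
  obtain ⟨e, he⟩ := this
  have hmem : Polynomial.X - Polynomial.C e ∈ I := by
    rw [← Ideal.Quotient.eq_zero_iff_mem]
    have : (Ideal.Quotient.mk I) (Polynomial.X - Polynomial.C e)
        = π Polynomial.X - π (Polynomial.C e) := by simp [π]
    have hce : π (Polynomial.C e) = algebraMap k _ e := by
      simpa using π.commutes e
    rw [this, hce, sub_eq_zero]
    exact he.symm
  have hdvd : pm a r ∣ Polynomial.X - Polynomial.C e := by
    rwa [hI, Ideal.mem_span_singleton] at hmem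
  have hne : Polynomial.X - Polynomial.C e ≠ 0 := by
    intro h
    have := congrArg (Polynomial.coeff · 1) h
    simp at this
  have hdeg := Polynomial.degree_le_of_dvd hdvd hne
  have h2 : (pm a r).degree = 2 := by
    simpa [pm] using Polynomial.degree_X_pow_add_C (n := 2) (by norm_num) (3*r*a⁻¹)
  have h1 : (Polynomial.X - Polynomial.C e : Polynomial k).degree ≤ 1 := by
    calc (Polynomial.X - Polynomial.C e : Polynomial k).degree
        ≤ max (Polynomial.X : Polynomial k).degree (Polynomial.C e).degree :=
          Polynomial.degree_sub_le _ _
      _ ≤ 1 := by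
          simp [Polynomial.degree_X, Polynomial.degree_C_le]
          exact Polynomial.degree_C_le.trans (by norm_num)
  rw [h2] at hdeg
  have := hdeg.trans h1
  norm_num at this

noncomputable def Φ : Polynomial (Polynomial k) →ₐ[k] MvPolynomial (Fin 2) k :=
  Polynomial.aevalTower (Polynomial.aeval (X 0)) (X 1)

lemma Φ_surj : Function.Surjective (Φ (k := k)) := by
  intro f
  have htop : (⊤ : Subalgebra k (MvPolynomial (Fin 2) k)) ≤ Φ.range := by
    rw [← MvPolynomial.adjoin_range_X]
    apply Algebra.adjoin_le
    rintro x ⟨i, rfl⟩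
    fin_cases i
    · exact ⟨Polynomial.C Polynomial.X, by simp [Φ]⟩
    · exact ⟨Polynomial.X, by simp [Φ]⟩
  exact htop (by trivial)

lemma ψΦ_C (p : Polynomial k) :
    ψ a r (Φ (Polynomial.C p)) = Polynomial.aeval (pu a r) p := by
  simp only [Φ, Polynomial.aevalTower_C]
  have : (ψ a r).comp (Polynomial.aeval (X 0) : Polynomial k →ₐ[k] MvPolynomial (Fin 2) k)
      = Polynomial.aeval (pu a r) := by
    apply Polynomial.algHom_ext
    simp
  exact AlgHom.congr_fun this p

lemma ψΦ_X : ψ a r (Φ (Polynomial.X)) = pv a r := by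
  simp [Φ]

noncomputable def Wm (b c : k) : Polynomial (Polynomial k) :=
  Polynomial.X ^ 2
    + Polynomial.C (Polynomial.C a⁻¹
        * (Polynomial.X ^ 3 + Polynomial.C b * Polynomial.X + Polynomial.C c))

lemma Wm_monic (b c : k) : (Wm a b c).Monic := by
  apply Polynomial.monic_X_pow_add
  exact lt_of_le_of_lt Polynomial.degree_C_le (by norm_num)

lemma ΦWm (ha : a ≠ 0) (b c : k) :
    Φ (Wm a b c) = C a⁻¹ * weierstrassPoly a b c := by
  have key : C (a⁻¹*a) = (1 : MvPolynomial (Fin 2) k) := by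
    rw [inv_mul_cancel₀ ha]; exact MvPolynomial.C_1
  rw [MvPolynomial.C_mul] at key
  simp only [Wm, weierstrassPoly, map_add, map_mul, map_pow, Φ, Polynomial.aevalTower_C,
    Polynomial.aevalTower_X, Polynomial.aeval_X, Polynomial.aeval_C, MvPolynomial.C_mul,
    map_ofNat, Polynomial.aeval_X_pow, MvPolynomial.algebraMap_eq]
  linear_combination (-(X 1 : MvPolynomial (Fin 2) k) ^ 2) * key

lemma σ_aeval_pu (p : Polynomial k) :
    Polynomial.aeval (-Polynomial.X : Polynomial k) (Polynomial.aeval (pu a r) p)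
      = Polynomial.aeval (pu a r) p := by
  have : (Polynomial.aeval (-Polynomial.X : Polynomial k) :
        Polynomial k →ₐ[k] Polynomial k).comp (Polynomial.aeval (pu a r))
      = Polynomial.aeval (pu a r) := by
    apply Polynomial.algHom_ext
    simp only [AlgHom.coe_comp, Function.comp_apply, Polynomial.aeval_X]
    simp only [pu, map_add, map_mul, map_pow, Polynomial.aeval_X, Polynomial.aeval_C]
    ring_nf
    simp [Polynomial.algebraMap_eq]
  exact AlgHom.congr_fun this p

lemma σ_pv :
    Polynomial.aeval (-Polynomial.X : Polynomial k) (pv a r) = -pv a r := by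
  simp only [pv, map_add, map_mul, map_pow, Polynomial.aeval_X, Polynomial.aeval_C]
  ring_nf
  simp [Polynomial.algebraMap_eq]
  ring

lemma pv_ne (ha : a ≠ 0) : pv a r ≠ 0 := by
  intro h
  have := congrArg (Polynomial.coeff · 3) h
  simp only [pv, Polynomial.coeff_add, Polynomial.coeff_C_mul, Polynomial.coeff_X_pow,
    Polynomial.coeff_zero] at this
  rw [Polynomial.coeff_X] at this
  simp at this
  exact ha this

lemma pu_natDegree (ha : a ≠ 0) : (pu a r).natDegree = 2 := by
  unfold pu; compute_degree!

lemma aeval_pu_inj (ha : a ≠ 0) (p : Polynomial k)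
    (hp : Polynomial.aeval (pu a r) p = 0) : p = 0 := by
  rw [← Polynomial.comp_eq_aeval] at hp
  by_contra hne
  have hdeg := Polynomial.natDegree_comp (p := p) (q := pu a r)
  rw [hp] at hdeg
  simp only [Polynomial.natDegree_zero] at hdeg
  rw [pu_natDegree a r ha] at hdeg
  have hp0 : p.natDegree = 0 := by omega
  obtain ⟨e, rfl⟩ := Polynomial.natDegree_eq_zero.mp hp0
  rw [Polynomial.C_comp] at hp
  rw [hp] at hne
  simp at hne

lemma ker_sub (ha : a ≠ 0) (h2 : (2:k) ≠ 0) (b c : k) (hb : b = -(3*r^2)) (hc : c = 2*r^3)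
    (f : MvPolynomial (Fin 2) k) (hf : ψ a r f = 0) :
    f ∈ Ideal.span {weierstrassPoly a b c} := by
  obtain ⟨F, rfl⟩ := Φ_surj f
  have hmono := Wm_monic a (k := k) b c
  have hdiv := Polynomial.modByMonic_add_div F (Wm a b c)
  set ρ := F %ₘ Wm a b c with hρ
  -- ψ Φ ρ = 0
  have hψρ : ψ a r (Φ ρ) = 0 := by
    have h1 : Φ F = Φ ρ + Φ (Wm a b c) * Φ (F /ₘ Wm a b c) := by
      rw [← map_mul, ← map_add, hdiv]
    have h2' : ψ a r (Φ (Wm a b c)) = 0 := by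
      rw [ΦWm a ha, map_mul, ψ_C]
      rw [hb, hc] at *
      rw [ψW]
      ring
    have := congrArg (ψ a r) h1
    rw [hf, map_add, map_mul, h2'] at this
    simpa using this.symm
  have hdw : (Wm a (k := k) b c).degree = 2 := by
    unfold Wm
    exact Polynomial.degree_X_pow_add_C (by norm_num) _
  have hdegρ : ρ.degree ≤ 1 := by
    have hlt := Polynomial.degree_modByMonic_lt F hmono
    rw [hdw] at hlt
    exact Order.le_of_lt_succ (by exact_mod_cast hlt)
  have hrep := Polynomial.eq_X_add_C_of_degree_le_one hdegρ
  set ρ1 := ρ.coeff 1 with hρ1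
  set ρ0 := ρ.coeff 0 with hρ0
  have hev : Polynomial.aeval (pu a r) ρ1 * pv a r + Polynomial.aeval (pu a r) ρ0 = 0 := by
    have h := hψρ
    rw [hrep] at h
    simp only [map_add, map_mul] at h
    rwa [ψΦ_C, ψΦ_X, ψΦ_C] at h
  have hσ : Polynomial.aeval (pu a r) ρ1 * (-pv a r) + Polynomial.aeval (pu a r) ρ0 = 0 := by
    have h := congrArg (Polynomial.aeval (-Polynomial.X : Polynomial k)) hev
    simp only [map_add, map_mul, map_zero] at h
    rwa [σ_aeval_pu, σ_aeval_pu, σ_pv] at h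
  have h2P : (2 : Polynomial k) ≠ 0 := by
    intro h
    have := congrArg (Polynomial.coeff · 0) h
    simp at this
    exact h2 (by exact_mod_cast this)
  have hA0 : Polynomial.aeval (pu a r) ρ0 = 0 := by
    have h20 : (2 : Polynomial k) * Polynomial.aeval (pu a r) ρ0 = 0 := by
      linear_combination hev + hσ
    rcases mul_eq_zero.mp h20 with h | h
    · exact absurd h h2P
    · exact h
  have hA1 : Polynomial.aeval (pu a r) ρ1 = 0 := by
    have h21 : Polynomial.aeval (pu a r) ρ1 * pv a r = 0 := by
      linear_combination hev - hA0
    rcases mul_eq_zero.mp h21 with h | h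
    · exact h
    · exact absurd h (pv_ne a r ha)
  have hρ10 : ρ1 = 0 := aeval_pu_inj a r ha _ hA1
  have hρ00 : ρ0 = 0 := aeval_pu_inj a r ha _ hA0
  have hρzero : ρ = 0 := by rw [hrep, hρ10, hρ00]; simp
  obtain ⟨q, hq⟩ : ∃ q, F = Wm a b c * q :=
    ⟨F /ₘ Wm a b c, by conv_lhs => rw [← hdiv, hρzero, zero_add]⟩
  rw [Ideal.mem_span_singleton]
  exact ⟨C a⁻¹ * Φ q, by rw [hq, map_mul, ΦWm a ha]; ring⟩

lemma pm_ne : pm a r ≠ 0 := by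
  intro h
  have h1 : (pm a r).coeff 2 = 1 := by
    simp [pm, Polynomial.coeff_X_pow, Polynomial.coeff_C]
  rw [h] at h1
  simp at h1

lemma pu_sub_C (ha : a ≠ 0) :
    pu a r - Polynomial.C r = Polynomial.C (-a) * pm a r := by
  rw [pu_eq a r ha]; ring

lemma pu_sub_C_ne (ha : a ≠ 0) : pu a r - Polynomial.C r ≠ 0 := by
  rw [pu_sub_C a r ha]
  refine mul_ne_zero ?_ (pm_ne a r)
  simpa using ha

lemma double_root {k : Type u} [Field k] (h2 : (2:k) ≠ 0) (h27 : (27:k) ≠ 0)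
    (b c : k) (hΔ : -4 * b ^ 3 - 27 * c ^ 2 = 0) :
    ∃ r : k, b = -(3*r^2) ∧ c = 2*r^3 := by
  by_cases hb0 : b = 0
  · have hc0 : c = 0 := by
      have h270 : (27 : k) * c^2 = 0 := by
        rw [hb0] at hΔ
        linear_combination -hΔ
      rcases mul_eq_zero.mp h270 with h | h
      · exact absurd h h27
      · exact pow_eq_zero_iff (n := 2) (by norm_num) |>.mp h
    exact ⟨0, by rw [hb0]; ring, by rw [hc0]; ring⟩
  · have h2b : (2*b) ≠ 0 := mul_ne_zero h2 hb0
    refine ⟨-3*c/(2*b), ?_, ?_⟩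
    · field_simp
      linear_combination -hΔ
    · field_simp
      linear_combination (-1:k) * c * hΔ

end WCD

open WCD

set_option maxHeartbeats 4000000
set_option synthInstance.maxHeartbeats 1000000

/-- Let `k` be a field of characteristic `p > 3`, let
`C = Spec (k[x,y]/(a y² + x³ + b x + c))` with `a ≠ 0` be an integral affine Weierstrass
curve with discriminant `Δ = -4b³ - 27c² = 0`, and let `ν : C̄ → C` be the normalization.
Then `dim_k (ν_* O_{C̄} / O_C) = 1`.

Algebraically: with `A = k[x,y]/(a y² + x³ + b x + c)` an integral domain, the normalization
`Ā` is the integral closure of `A` in its fraction field `Frac A`, and the conductor quotient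
`Ā / A` (computed inside `Frac A` as a quotient of `k`-submodules) is a one-dimensional
`k`-vector space. -/
theorem weierstrass_cusp_delta_invariant_one
    (k : Type u) [Field k] (hchar : 3 < ringChar k)
    (a b c : k) (ha : a ≠ 0)
    (hΔ : -4 * b ^ 3 - 27 * c ^ 2 = 0)
    [IsDomain (weierstrassRing k a b c)] :
    Module.finrank k
      ((Submodule.restrictScalars k
          (Subalgebra.toSubmodule
            (integralClosure (weierstrassRing k a b c)
              (FractionRing (weierstrassRing k a b c))))) ⧸
        (Submodule.comap
          (Submodule.restrictScalars k
            (Subalgebra.toSubmodule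
              (integralClosure (weierstrassRing k a b c)
                (FractionRing (weierstrassRing k a b c))))).subtype
          (Submodule.restrictScalars k
            (LinearMap.range (Algebra.linearMap (weierstrassRing k a b c)
              (FractionRing (weierstrassRing k a b c))))))) = 1 := by
  -- characteristic facts
  have hcast : ∀ n : ℕ, 0 < n → n < 4 → (n : k) ≠ 0 := by
    intro n hn hn4 h
    have hd : ringChar k ∣ n := (ringChar.spec k n).mp h
    have := Nat.le_of_dvd hn hd
    omega
  have h2 : (2 : k) ≠ 0 := by have := hcast 2 (by norm_num) (by norm_num); exact_mod_cast this
  have h3 : (3 : k) ≠ 0 := by have := hcast 3 (by norm_num) (by norm_num); exact_mod_cast this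
  have h27 : (27 : k) ≠ 0 := by
    intro h
    apply h3
    have h33 : (27 : k) = 3^3 := by norm_num
    rw [h33] at h
    exact pow_eq_zero_iff (n := 3) (by norm_num) |>.mp h
  obtain ⟨r, hb, hc⟩ := double_root h2 h27 b c hΔ
  set A := weierstrassRing k a b c with hA
  set F := FractionRing A with hF
  set W := weierstrassPoly a b c with hW
  have hψW : ψ a r W = 0 := by rw [hW, hb, hc]; exact ψW a r
  -- the induced map on the quotient
  have hker0 : ∀ f ∈ Ideal.span {W}, ψ a r f = 0 := by
    intro f hf
    rw [Ideal.mem_span_singleton] at hf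
    obtain ⟨g, rfl⟩ := hf
    rw [map_mul, hψW, zero_mul]
  let ψq : A →ₐ[k] Polynomial k := Ideal.Quotient.liftₐ (Ideal.span {W}) (ψ a r) hker0
  have hψq_mk : ∀ f, ψq (Ideal.Quotient.mk (Ideal.span {W}) f) = ψ a r f := by
    intro f
    rw [Ideal.Quotient.liftₐ_apply]
    exact Ideal.Quotient.lift_mk _ _ _
  have hinj : Function.Injective ψq := by
    rw [injective_iff_map_eq_zero]
    intro x hx
    obtain ⟨f, rfl⟩ := Ideal.Quotient.mk_surjective x
    rw [hψq_mk] at hx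
    rw [Ideal.Quotient.eq_zero_iff_mem]
    exact ker_sub a r ha h2 b c hb hc f hx
  -- embed Frac A into RatFunc k
  let φ : A →+* RatFunc k := (algebraMap (Polynomial k) (RatFunc k)).comp ψq.toRingHom
  have hφinj : Function.Injective φ :=
    (IsFractionRing.injective (Polynomial k) (RatFunc k)).comp hinj
  let g : F →+* RatFunc k := IsFractionRing.lift hφinj
  have hg : ∀ x : A, g (algebraMap A F x)
      = algebraMap (Polynomial k) (RatFunc k) (ψq x) :=
    fun x => IsFractionRing.lift_algebraMap hφinj x
  have hginj : Function.Injective g := g.injective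
  -- the normalizing element τ
  have hdenA : Ideal.Quotient.mk (Ideal.span {W}) (X 0 - C r) ≠ 0 := by
    intro h
    have h0 := hψq_mk (X 0 - C r)
    rw [h, map_zero] at h0
    have hval : ψ a r (X 0 - C r) = 0 := h0.symm
    rw [map_sub, ψ_X0, ψ_C] at hval
    exact pu_sub_C_ne a r ha hval
  have hdenF : algebraMap A F (Ideal.Quotient.mk (Ideal.span {W}) (X 0 - C r)) ≠ 0 := by
    intro h
    exact hdenA (IsFractionRing.injective A F (by rw [h, map_zero]))
  let τ : F := algebraMap A F (Ideal.Quotient.mk _ (X 1))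
      / algebraMap A F (Ideal.Quotient.mk _ (X 0 - C r))
  have hgτ : g τ = algebraMap (Polynomial k) (RatFunc k) Polynomial.X := by
    show g (_ / _) = _
    rw [map_div₀, hg, hg, hψq_mk, hψq_mk, map_sub, ψ_X0, ψ_C, ψ_X1, pv_eq_X_mul a r,
      map_mul, mul_div_assoc, div_self, mul_one]
    intro h0
    exact pu_sub_C_ne a r ha (IsFractionRing.injective (Polynomial k) (RatFunc k)
      (by rw [h0, map_zero]))
  have hτsq : τ^2
      = algebraMap A F (Ideal.Quotient.mk _ (C (-a⁻¹) * (X 0 + C (2*r)))) := by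
    apply hginj
    rw [map_pow, hgτ, ← map_pow, hg, hψq_mk, Tsq a r ha]
  have hτint : τ ∈ integralClosure A F := by
    refine ⟨Polynomial.X^2
      - Polynomial.C (Ideal.Quotient.mk (Ideal.span {W}) (C (-a⁻¹) * (X 0 + C (2*r)))),
      Polynomial.monic_X_pow_sub_C _ (by norm_num), ?_⟩
    rw [Polynomial.eval₂_sub, Polynomial.eval₂_X_pow, Polynomial.eval₂_C, hτsq, sub_self]
  -- every integral element is a₀ + e·τ
  have hrep : ∀ z : F, z ∈ integralClosure A F →
      ∃ (a₀ : A) (e : k), z = algebraMap A F a₀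
        + algebraMap A F (Ideal.Quotient.mk (Ideal.span {W}) (C e)) * τ := by
    intro z hz
    obtain ⟨P, Pm, Pev⟩ := hz
    have hzint : IsIntegral (Polynomial k) (g z) := by
      refine ⟨P.map ψq.toRingHom, Pm.map _, ?_⟩
      rw [Polynomial.eval₂_map]
      have hcomp : (algebraMap (Polynomial k) (RatFunc k)).comp ψq.toRingHom
          = g.comp (algebraMap A F) := by
        refine RingHom.ext fun x => ?_
        simp only [RingHom.coe_comp, Function.comp_apply, AlgHom.toRingHom_eq_coe,
          RingHom.coe_coe]
        exact (hg x).symm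
      rw [hcomp, ← Polynomial.hom_eval₂, Pev, map_zero]
    obtain ⟨p, hp⟩ := IsIntegrallyClosed.isIntegral_iff.mp hzint
    obtain ⟨f, e, hfe⟩ := span_eq a r ha p
    refine ⟨Ideal.Quotient.mk _ f, e, hginj ?_⟩
    rw [map_add, map_mul, hg, hg, hψq_mk, hψq_mk, hgτ, ψ_C, ← hp, hfe, map_add, map_mul]
  -- τ is not in (the image of) A
  have hτnot : ∀ x : A, algebraMap A F x ≠ τ := by
    intro x hx
    obtain ⟨f, rfl⟩ := Ideal.Quotient.mk_surjective x
    have h1 : algebraMap (Polynomial k) (RatFunc k) (ψ a r f)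
        = algebraMap (Polynomial k) (RatFunc k) Polynomial.X := by
      rw [← hψq_mk, ← hg, hx, hgτ]
    have hXf : ψ a r f = Polynomial.X :=
      IsFractionRing.injective (Polynomial k) (RatFunc k) h1
    exact X_not_mem a r ha ⟨f, hXf⟩
  -- conclude
  have hsmul : ∀ e : k, algebraMap A F (Ideal.Quotient.mk (Ideal.span {W}) (C e)) * τ
      = e • τ := by
    intro e
    rw [Algebra.smul_def e τ]
    congr 1
  set M := Submodule.restrictScalars k
      (Subalgebra.toSubmodule (integralClosure A F)) with hM
  set N := Submodule.comap M.subtype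
      (Submodule.restrictScalars k (LinearMap.range (Algebra.linearMap A F))) with hN
  have hτM : τ ∈ M := hτint
  apply finrank_eq_one (Submodule.Quotient.mk (⟨τ, hτM⟩ : M))
  · rw [Ne, Submodule.Quotient.mk_eq_zero]
    intro hmem
    rw [hN, Submodule.mem_comap, Submodule.restrictScalars_mem] at hmem
    obtain ⟨x, hx⟩ := hmem
    exact hτnot x hx
  · intro w
    obtain ⟨zM, rfl⟩ := Submodule.Quotient.mk_surjective N w
    obtain ⟨z, hzM⟩ := zM
    obtain ⟨a₀, e, hze⟩ := hrep z hzM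
    refine ⟨e, ?_⟩
    rw [← Submodule.Quotient.mk_smul, Submodule.Quotient.eq]
    rw [hN, Submodule.mem_comap, Submodule.restrictScalars_mem]
    refine ⟨-a₀, ?_⟩
    show algebraMap A F (-a₀) = ((e • (⟨τ, hτM⟩ : M) - ⟨z, hzM⟩ : M) : F)
    have hcoe : ((e • (⟨τ, hτM⟩ : M) - ⟨z, hzM⟩ : M) : F) = e • τ - z := rfl
    rw [hcoe, map_neg, hze, ← hsmul e]
    ring
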